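/- Let Q be a finite quiver and a, b arrows with t(a)=i_a, h(a)=j_a, t(b)=i_b, h(b)=j_b. Suppose every path in Q from t(b) to h(a) is of the form qb or aq for some path q. Then Ext¹_{KQ}(C(a), C(b)) = 0. -/

import Mathlib

open Quiver

universe w v u

/-- A representation of a quiver `V` over a field `K`: a vector space at each vertex
and a linear map for each arrow. -/
structure QRep (K : Type u) [Field K] (V : Type v) [Quiver.{v} V] where
  space : V → Type w
  [isAddCommGroup : ∀ i, AddCommGroup (space i)]
  [isModule : ∀ i, Module K (space i)]
  map : ∀ {i j : V}, (i ⟶ j) → (space i →ₗ[K] space j)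

attribute [instance] QRep.isAddCommGroup QRep.isModule

/-- A morphism of quiver representations. -/
structure QRepHom {K : Type u} [Field K] {V : Type v} [Quiver.{v} V]
    (X Y : QRep.{w} K V) where
  app : ∀ i, X.space i →ₗ[K] Y.space i
  comm : ∀ {i j : V} (a : i ⟶ j), (Y.map a).comp (app i) = (app j).comp (X.map a)

/-- The projective representation `KQe_i`: at vertex `j` it has basis the paths `i ⟶ j`,
and arrows act by postcomposition. -/
noncomputable def projRep (K : Type u) [Field K] (V : Type v) [Quiver.{v} V] (i : V) :
    QRep.{max u v} K V where
  space j := Path i j →₀ K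
  map a := Finsupp.lmapDomain K K (fun p => p.cons a)

/-- Right multiplication by an arrow `a : i ⟶ j`, as a morphism `KQe_j → KQe_i`. -/
noncomputable def rmulArrow {K : Type u} [Field K] {V : Type v} [Quiver.{v} V]
    {i j : V} (a : i ⟶ j) : QRepHom (projRep K V j) (projRep K V i) where
  app k := Finsupp.lmapDomain K K (fun p : Path j k => (a.toPath).comp p)
  comm := by
    intro k l b
    refine Finsupp.lhom_ext fun p c => ?_
    show Finsupp.mapDomain _ (Finsupp.mapDomain _ (Finsupp.single p c)) =
      Finsupp.mapDomain _ (Finsupp.mapDomain _ (Finsupp.single p c))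
    simp [Finsupp.mapDomain_single, Quiver.Path.comp_cons]

/-- The cokernel representation of a morphism of representations. -/
noncomputable def cokerRep {K : Type u} [Field K] {V : Type v} [Quiver.{v} V]
    {F X : QRep.{w} K V} (f : QRepHom F X) : QRep.{w} K V where
  space i := X.space i ⧸ LinearMap.range (f.app i)
  map {i j} a := Submodule.mapQ _ _ (X.map a) (by
    rintro x ⟨y, rfl⟩
    exact ⟨F.map a y, by
      rw [← LinearMap.comp_apply, ← f.comm, LinearMap.comp_apply]⟩)

/-- The projection onto the cokernel representation. -/
noncomputable def cokerProj {K : Type u} [Field K] {V : Type v} [Quiver.{v} V]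
    {F X : QRep.{w} K V} (f : QRepHom F X) : QRepHom X (cokerRep f) where
  app i := (LinearMap.range (f.app i)).mkQ
  comm {i j} a := Submodule.mapQ_mkQ _ _ (h := by
    rintro x ⟨y, rfl⟩
    exact ⟨F.map a y, by
      rw [← LinearMap.comp_apply, ← f.comm, LinearMap.comp_apply]⟩)

/-- The representation `C(a) = KQe_{t(a)}/KQa` for an arrow `a : i ⟶ j`. -/
noncomputable def Ca {K : Type u} [Field K] {V : Type v} [Quiver.{v} V]
    {i j : V} (a : i ⟶ j) : QRep.{max u v} K V :=
  cokerRep (rmulArrow (K := K) a)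

/-- `Hom(A,B) = 0` in the category of representations. -/
def HomVanishes {K : Type u} [Field K] {V : Type v} [Quiver.{v} V]
    (A B : QRep.{w} K V) : Prop :=
  ∀ θ : QRepHom A B, ∀ (k : V) (x : A.space k), θ.app k x = 0

/-- `u, v` form a short exact sequence `0 → X → E → Z → 0` of representations. -/
def IsSES {K : Type u} [Field K] {V : Type v} [Quiver.{v} V]
    {X E Z : QRep.{w} K V} (u : QRepHom X E) (v : QRepHom E Z) : Prop :=
  ∀ k : V, Function.Injective (u.app k) ∧ Function.Surjective (v.app k) ∧
    LinearMap.range (u.app k) = LinearMap.ker (v.app k)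

/-- `Ext¹(Z,X) = 0`: every short exact sequence `0 → X → E → Z → 0` of
representations splits. -/
def ExtVanishes {K : Type u} [Field K] {V : Type v} [Quiver.{v} V]
    (Z X : QRep.{w} K V) : Prop :=
  ∀ (E : QRep.{w} K V) (u : QRepHom X E) (v : QRepHom E Z), IsSES u v →
    ∃ s : QRepHom Z E, ∀ k : V, (v.app k).comp (s.app k) = LinearMap.id

/-! A short exact sequence `0 → X → E → C(a) → 0` splits as soon as the generator
`e = [e_{t(a)}]` of `C(a)` lifts to some `x ∈ E` with `a x = 0`: then `p ↦ p x` defines a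
morphism `KQe_{t(a)} → E` that kills `KQa` and so descends to a section `C(a) → E`. An
arbitrary lift `x₀` has `a x₀ ∈ X`; if `a` acts surjectively on `X`, then `a x₀ = a z` for
some `z ∈ X` and `x = x₀ - z` will do. For `X = C(b)` that surjectivity is the hypothesis on
paths: a path `t(b) ⟶ h(a)` beginning with `b` is zero in `C(b)`, and one ending with `a` lies
in the image of `a`. -/

variable {K : Type u} [Field K] {V : Type v} [Quiver.{v} V]

namespace QRep

noncomputable def pathMap (X : QRep.{w} K V) {i : V} :
    ∀ {j : V}, Path i j → (X.space i →ₗ[K] X.space j)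
  | _, Path.nil => LinearMap.id
  | _, Path.cons p c => X.map c ∘ₗ X.pathMap p

variable (X : QRep.{w} K V)

@[simp] lemma pathMap_cons {i j k : V} (p : Path i j) (c : j ⟶ k) :
    X.pathMap (p.cons c) = X.map c ∘ₗ X.pathMap p := rfl

@[simp] lemma pathMap_toPath {i j : V} (c : i ⟶ j) : X.pathMap c.toPath = X.map c := rfl

lemma pathMap_comp {i j k : V} (p : Path i j) (q : Path j k) :
    X.pathMap (p.comp q) = X.pathMap q ∘ₗ X.pathMap p := by
  induction q with
  | nil => rfl
  | cons q c ih => rw [Path.comp_cons, pathMap_cons, pathMap_cons, ih, LinearMap.comp_assoc]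

end QRep

lemma QRepHom.app_pathMap {X Y : QRep.{w} K V} (θ : QRepHom X Y) {i j : V} (p : Path i j)
    (x : X.space i) : θ.app j (X.pathMap p x) = Y.pathMap p (θ.app i x) := by
  induction p with
  | nil => rfl
  | cons p c ih =>
    simp only [QRep.pathMap_cons, LinearMap.comp_apply, ← ih]
    exact (LinearMap.congr_fun (θ.comm c) _).symm

namespace projRep

lemma map_single {i j k : V} (c : j ⟶ k) (p : Path i j) (d : K) :
    (projRep K V i).map c (Finsupp.single p d : (projRep K V i).space j) =
      Finsupp.single (p.cons c) d :=
  Finsupp.mapDomain_single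

lemma pathMap_single {i j k : V} (q : Path i j) (p : Path j k) (d : K) :
    (projRep K V i).pathMap p (Finsupp.single q d : (projRep K V i).space j) =
      Finsupp.single (q.comp p) d := by
  induction p with
  | nil => rfl
  | cons p c ih => exact (congrArg ((projRep K V i).map c) ih).trans (map_single c _ d)

noncomputable def lift (E : QRep.{max u v} K V) {i : V} (x : E.space i) :
    QRepHom (projRep K V i) E where
  app k := Finsupp.lift (E.space k) K (Path i k) fun p => E.pathMap p x
  comm c := Finsupp.lhom_ext fun p d => by
    change E.map c (Finsupp.lift _ K _ _ (Finsupp.single p d)) =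
      Finsupp.lift _ K _ _ ((projRep K V i).map c (Finsupp.single p d))
    simp [map_single]

lemma lift_app_single (E : QRep.{max u v} K V) {i k : V} (x : E.space i) (p : Path i k) (d : K) :
    (lift E x).app k (Finsupp.single p d : (projRep K V i).space k) = d • E.pathMap p x :=
  Finsupp.sum_single_index (zero_smul K _)

end projRep

lemma rmulArrow.app_single {i j k : V} (a : i ⟶ j) (p : Path j k) (d : K) :
    (rmulArrow (K := K) a).app k (Finsupp.single p d : (projRep K V j).space k) =
      Finsupp.single (a.toPath.comp p) d :=
  Finsupp.mapDomain_single

namespace cokerRep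

variable {F X E : QRep.{w} K V} (f : QRepHom F X)

noncomputable def desc (g : QRepHom X E) (hfg : ∀ k, g.app k ∘ₗ f.app k = 0) :
    QRepHom (cokerRep f) E where
  app k := (LinearMap.range (f.app k)).liftQ (g.app k) (LinearMap.range_le_ker_iff.2 (hfg k))
  comm c := Submodule.linearMap_qext _ (LinearMap.ext fun x => LinearMap.congr_fun (g.comm c) x)

end cokerRep

namespace Ca

variable {i j : V} (a : i ⟶ j)

noncomputable def gen : (Ca (K := K) a).space i :=
  Submodule.Quotient.mk (Finsupp.single Path.nil 1 : (projRep K V i).space i)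

lemma pathMap_gen {k : V} (p : Path i k) :
    (Ca (K := K) a).pathMap p (gen a) =
      Submodule.Quotient.mk (Finsupp.single p 1 : (projRep K V i).space k) := by
  refine ((cokerProj (rmulArrow (K := K) a)).app_pathMap p _).symm.trans ?_
  exact congrArg Submodule.Quotient.mk
    ((projRep.pathMap_single _ p 1).trans (by rw [Path.nil_comp]))

lemma mk_single_toPath_comp_eq_zero {k : V} (q : Path j k) (d : K) :
    (Submodule.Quotient.mk (Finsupp.single (a.toPath.comp q) d : (projRep K V i).space k) :
      (Ca (K := K) a).space k) = 0 :=
  (Submodule.Quotient.mk_eq_zero _).2 ⟨Finsupp.single q d, rmulArrow.app_single a q d⟩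

lemma map_gen : (Ca (K := K) a).map a (gen a) = 0 :=
  (congrArg _ (projRep.map_single a Path.nil 1)).trans
    (mk_single_toPath_comp_eq_zero a Path.nil 1)

noncomputable def desc (E : QRep.{max u v} K V) (x : E.space i) (hx : E.map a x = 0) :
    QRepHom (Ca (K := K) a) E :=
  cokerRep.desc _ (projRep.lift E x) fun k => Finsupp.lhom_ext fun q d => by
    change (projRep.lift E x).app k ((rmulArrow a).app k (Finsupp.single q d)) = 0
    rw [rmulArrow.app_single, projRep.lift_app_single, QRep.pathMap_comp, LinearMap.comp_apply,
      QRep.pathMap_toPath, hx, map_zero, smul_zero]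

lemma mk_single_eq_smul_pathMap_gen {k : V} (p : Path i k) (d : K) :
    (Submodule.Quotient.mk (Finsupp.single p d : (projRep K V i).space k) :
      (Ca (K := K) a).space k) = d • (Ca (K := K) a).pathMap p (gen a) := by
  rw [pathMap_gen]
  exact congrArg Submodule.Quotient.mk (Finsupp.smul_single_one p d).symm

lemma desc_app_gen (E : QRep.{max u v} K V) (x : E.space i) (hx : E.map a x = 0) :
    (desc a E x hx).app i (gen a) = x :=
  (projRep.lift_app_single E x Path.nil 1).trans (one_smul K x)

lemma map_surjective_of_paths {ia ja ib jb : V} (a : ia ⟶ ja) (b : ib ⟶ jb)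
    (hpaths : ∀ p : Path ib ja,
      (∃ q : Path jb ja, p = (b.toPath).comp q) ∨ (∃ q : Path ib ia, p = q.cons a)) :
    Function.Surjective ((Ca (K := K) b).map a) := by
  rw [← LinearMap.range_eq_top, eq_top_iff]
  rintro y -
  obtain ⟨f, rfl⟩ := Submodule.Quotient.mk_surjective _ y
  induction f using Finsupp.induction_linear with
  | zero => exact zero_mem _
  | add f g hf hg => exact add_mem hf hg
  | single p d =>
    rcases hpaths p with ⟨q, rfl⟩ | ⟨q, rfl⟩
    · rw [mk_single_toPath_comp_eq_zero]
      exact zero_mem _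
    · exact ⟨Submodule.Quotient.mk (Finsupp.single q d), congrArg _ (projRep.map_single a q d)⟩

end Ca

lemma IsSES.exists_lift_map_eq_zero {X E Z : QRep.{w} K V} {u : QRepHom X E} {v : QRepHom E Z}
    (huv : IsSES u v) {i j : V} {a : i ⟶ j} (hX : Function.Surjective (X.map a))
    {e : Z.space i} (he : Z.map a e = 0) : ∃ x, v.app i x = e ∧ E.map a x = 0 := by
  obtain ⟨x₀, rfl⟩ := (huv i).2.1 e
  have hker : E.map a x₀ ∈ LinearMap.ker (v.app j) := by
    rw [LinearMap.mem_ker, ← LinearMap.comp_apply, ← v.comm a, LinearMap.comp_apply, he]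
  rw [← (huv j).2.2] at hker
  obtain ⟨y, hy⟩ := hker
  obtain ⟨z, rfl⟩ := hX y
  have hvu : v.app i (u.app i z) = 0 := by
    rw [← LinearMap.mem_ker, ← (huv i).2.2]
    exact ⟨z, rfl⟩
  refine ⟨x₀ - u.app i z, by rw [map_sub, hvu, sub_zero], ?_⟩
  rw [map_sub, ← LinearMap.comp_apply (E.map a), u.comm a, LinearMap.comp_apply, hy, sub_self]

theorem extVanishes_Ca_of_map_surjective {i j : V} (a : i ⟶ j) (X : QRep.{max u v} K V)
    (hX : Function.Surjective (X.map a)) : ExtVanishes (Ca (K := K) a) X := by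
  intro E u v huv
  obtain ⟨x, hvx, hax⟩ := huv.exists_lift_map_eq_zero hX (Ca.map_gen a)
  refine ⟨Ca.desc a E x hax, fun k =>
    Submodule.linearMap_qext _ (Finsupp.lhom_ext fun p d => ?_)⟩
  change v.app k ((Ca.desc a E x hax).app k (Submodule.Quotient.mk (Finsupp.single p d))) =
    Submodule.Quotient.mk (Finsupp.single p d)
  rw [Ca.mk_single_eq_smul_pathMap_gen, map_smul, map_smul, QRepHom.app_pathMap,
    QRepHom.app_pathMap, Ca.desc_app_gen, hvx]
  exact (Ca.mk_single_eq_smul_pathMap_gen a p d).symm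

/-- If every path from `t(b)` to `h(a)` has the form `q b` or `a q`, then
`Ext¹(C(a), C(b)) = 0`. -/
theorem ext_Ca_Cb_eq_zero {K : Type u} [Field K] {V : Type v} [Quiver.{v} V]
    [Fintype V] [∀ i j : V, Fintype (i ⟶ j)]
    {ia ja ib jb : V} (a : ia ⟶ ja) (b : ib ⟶ jb)
    (hpaths : ∀ p : Path ib ja,
      (∃ q : Path jb ja, p = (b.toPath).comp q) ∨ (∃ q : Path ib ia, p = q.cons a)) :
    ExtVanishes (Ca (K := K) a) (Ca (K := K) b) :=
  extVanishes_Ca_of_map_surjective a _ (Ca.map_surjective_of_paths a b hpaths)
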